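/- arXiv:1605.02294 — 6 statements merged into one kernel-verified Lean document; each statement's English description precedes it below -/
import Mathlib

section
/- Two quantum operations E and F from B(H_d) to B(H_d') with Choi-Kraus operators {E_j} and {F_k} can be perfectly distinguished by a single use with an entangled input state |φ⟩ = (I⊗X)|Ψ⟩ (where |Ψ⟩ = Σ_i |i⟩|i⟩ and Tr(X†X)=1) if and only if the density operator XX† is orthogonal (in Hilbert-Schmidt inner product) to every operator E_j†F_k. -/
/-!
Every output of the two channels is a sum of rank-one operators: with `φ = (I ⊗ X)|Ψ⟩`, the
`j`-th Kraus operator maps `φ` to the vectorization of `E_j X`. The trace of a product of two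
such sums is `∑ j k |⟨E_j X, F_k X⟩|²`, a sum of nonnegative terms, so it vanishes iff every
`⟨E_j X, F_k X⟩ = Tr(X† E_j† F_k X)` does; by cyclicity of the trace, this is the conjugate of
`⟨E_j† F_k, X X†⟩`.
-/

open Matrix Kronecker

open scoped ComplexOrder

namespace Matrix

variable {l m n ι κ R : Type*} [Fintype m] [Fintype n]

theorem mul_vecMulVec_star_mul_conjTranspose [Semiring R] [StarRing R]
    (A : Matrix l n R) (φ : n → R) :
    A * vecMulVec φ (star φ) * Aᴴ = vecMulVec (A *ᵥ φ) (star (A *ᵥ φ)) := by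
  rw [mul_vecMulVec, vecMulVec_mul, star_mulVec]

theorem trace_vecMulVec_star_mul_vecMulVec_star [CommSemiring R] [StarRing R] (u v : n → R) :
    trace (vecMulVec u (star u) * vecMulVec v (star v)) =
      (star u ⬝ᵥ v) * star (star u ⬝ᵥ v) := by
  rw [vecMulVec_mul_vecMulVec, trace_vecMulVec, dotProduct_smul, smul_eq_mul,
    star_dotProduct, star_star, dotProduct_comm]

theorem trace_sum_vecMulVec_star_mul_sum_eq_zero_iff [CommRing R] [StarRing R] [PartialOrder R]
    [StarOrderedRing R] [NoZeroDivisors R] [Fintype ι] [Fintype κ]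
    (u : ι → n → R) (v : κ → n → R) :
    trace ((∑ i, vecMulVec (u i) (star (u i))) * ∑ k, vecMulVec (v k) (star (v k))) = 0 ↔
      ∀ i k, star (u i) ⬝ᵥ v k = 0 := by
  let w : ι × κ → R := fun p => star (u p.1) ⬝ᵥ v p.2
  have htrace : trace ((∑ i, vecMulVec (u i) (star (u i))) * ∑ k, vecMulVec (v k) (star (v k)))
      = w ⬝ᵥ star w := by
    simp only [Finset.sum_mul_sum, trace_sum, trace_vecMulVec_star_mul_vecMulVec_star,
      dotProduct, Fintype.sum_prod_type, Pi.star_apply, w]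
  rw [htrace, dotProduct_self_star_eq_zero, funext_iff, Prod.forall]
  rfl

/-- The vector `(I ⊗ X)|Ψ⟩` for `|Ψ⟩ = ∑ i, |i⟩|i⟩`: its `(i, a)` entry is `X a i`. -/
def colStack (X : Matrix m n R) : n × m → R := fun p => X p.2 p.1

theorem one_kronecker_mulVec_colStack [Semiring R] [DecidableEq n]
    (M : Matrix l m R) (X : Matrix m n R) :
    ((1 : Matrix n n R) ⊗ₖ M) *ᵥ colStack X = colStack (M * X) := by
  funext p
  simp [colStack, mulVec, dotProduct, Fintype.sum_prod_type, kroneckerMap_apply, one_apply,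
    ite_mul, mul_apply]

theorem star_colStack_dotProduct_colStack [NonUnitalSemiring R] [StarRing R]
    (Y Z : Matrix m n R) :
    star (colStack Y) ⬝ᵥ colStack Z = trace (Yᴴ * Z) := by
  simp only [dotProduct, Fintype.sum_prod_type, trace, diag_apply, mul_apply,
    conjTranspose_apply, Pi.star_apply, colStack]

theorem trace_conjTranspose_mul_mul_conjTranspose [CommSemiring R] [StarRing R] [Fintype l]
    (A B : Matrix m n R) (X : Matrix n l R) :
    trace ((Aᴴ * B)ᴴ * (X * Xᴴ)) = star (trace ((A * X)ᴴ * (B * X))) := by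
  rw [← trace_conjTranspose, conjTranspose_mul, conjTranspose_conjTranspose, conjTranspose_mul,
    conjTranspose_mul, conjTranspose_conjTranspose, ← Matrix.mul_assoc, trace_mul_cycle]
  simp only [Matrix.mul_assoc]

end Matrix

theorem single_use_distinguishability_general {d d' n0 n1 : ℕ}
    (E : Fin n0 → Matrix (Fin d') (Fin d) ℂ)
    (F : Fin n1 → Matrix (Fin d') (Fin d) ℂ)
    (X : Matrix (Fin d) (Fin d) ℂ)
    (φ : Fin d × Fin d → ℂ) (hφ : φ = fun p => X p.2 p.1) :
    Matrix.trace
      ((∑ j, ((1 : Matrix (Fin d) (Fin d) ℂ) ⊗ₖ E j) * Matrix.vecMulVec φ (star φ) *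
          ((1 : Matrix (Fin d) (Fin d) ℂ) ⊗ₖ E j)ᴴ) *
        (∑ k, ((1 : Matrix (Fin d) (Fin d) ℂ) ⊗ₖ F k) * Matrix.vecMulVec φ (star φ) *
          ((1 : Matrix (Fin d) (Fin d) ℂ) ⊗ₖ F k)ᴴ)) = 0
    ↔ ∀ j k, (((E j)ᴴ * F k)ᴴ * (X * Xᴴ)).trace = 0 := by
  obtain rfl : φ = colStack X := hφ
  simp only [mul_vecMulVec_star_mul_conjTranspose, one_kronecker_mulVec_colStack]
  rw [trace_sum_vecMulVec_star_mul_sum_eq_zero_iff]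
  simp only [star_colStack_dotProduct_colStack, trace_conjTranspose_mul_mul_conjTranspose,
    star_eq_zero]

/-- single-use perfect distinguishability with input `(I ⊗ X)|Ψ⟩`
iff `XX†` is Hilbert-Schmidt orthogonal to every `E_j† F_k`. -/
theorem single_use_distinguishability {d d' n0 n1 : ℕ}
    (E : Fin n0 → Matrix (Fin d') (Fin d) ℂ)
    (F : Fin n1 → Matrix (Fin d') (Fin d) ℂ)
    (hE : ∑ j, (E j)ᴴ * E j = 1) (hF : ∑ k, (F k)ᴴ * F k = 1)
    (X : Matrix (Fin d) (Fin d) ℂ) (hX : (Xᴴ * X).trace = 1)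
    (φ : Fin d × Fin d → ℂ) (hφ : φ = fun p => X p.2 p.1) :
    Matrix.trace
      ((∑ j, ((1 : Matrix (Fin d) (Fin d) ℂ) ⊗ₖ E j) * Matrix.vecMulVec φ (star φ) *
          ((1 : Matrix (Fin d) (Fin d) ℂ) ⊗ₖ E j)ᴴ) *
        (∑ k, ((1 : Matrix (Fin d) (Fin d) ℂ) ⊗ₖ F k) * Matrix.vecMulVec φ (star φ) *
          ((1 : Matrix (Fin d) (Fin d) ℂ) ⊗ₖ F k)ᴴ)) = 0
    ↔ ∀ j k, (((E j)ᴴ * F k)ᴴ * (X * Xᴴ)).trace = 0 :=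
  single_use_distinguishability_general E F X φ hφ
end

section
/- For any operator T on H_d with T†T ≤ I, there exist isometries U, V from H_d into H_{d'} with d' = 2d such that T = U†V. -/
open Matrix
open scoped ComplexOrder

/-!
Writing the positive semidefinite `1 - T†T` as `S†S`, the stacked matrix `V = [T; S]` satisfies
`V†V = T†T + S†S = 1`, and `U = [1; 0]` is an isometry with `U†V = T`. Reindexing along
`Fin d ⊕ Fin d ≃ Fin (2 * d)` gives the claim.
-/

namespace Matrix

section Stacking

variable {R : Type*} [Semiring R] [StarRing R] {l m m₁ m₂ n p : Type*} [Fintype m₁] [Fintype m₂]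

theorem conjTranspose_fromRows_mul_fromRows (A₁ : Matrix m₁ n R) (A₂ : Matrix m₂ n R)
    (B₁ : Matrix m₁ p R) (B₂ : Matrix m₂ p R) :
    (fromRows A₁ A₂)ᴴ * fromRows B₁ B₂ = A₁ᴴ * B₁ + A₂ᴴ * B₂ := by
  rw [conjTranspose_fromRows_eq_fromCols_conjTranspose, fromCols_mul_fromRows]

theorem conjTranspose_fromRows_one_zero_mul_fromRows [Fintype n] [DecidableEq n]
    (B₁ : Matrix n p R) (B₂ : Matrix m₂ p R) :
    (fromRows (1 : Matrix n n R) (0 : Matrix m₂ n R))ᴴ * fromRows B₁ B₂ = B₁ := by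
  simp [conjTranspose_fromRows_mul_fromRows]

theorem conjTranspose_submatrix_mul_submatrix [Fintype l] [Fintype m] (e : l ≃ m)
    (A : Matrix m n R) (B : Matrix m p R) :
    (A.submatrix e id)ᴴ * B.submatrix e id = Aᴴ * B := by
  rw [conjTranspose_submatrix, submatrix_mul_equiv, submatrix_id_id]

end Stacking

variable {𝕜 : Type*} [RCLike 𝕜] {n : Type*} [Fintype n]

theorem PosSemidef.exists_eq_conjTranspose_mul_self {A : Matrix n n 𝕜} (hA : A.PosSemidef) :
    ∃ B : Matrix n n 𝕜, A = Bᴴ * B := by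
  classical
  open scoped MatrixOrder in
  exact CStarAlgebra.nonneg_iff_eq_star_mul_self.mp hA.nonneg

theorem exists_conjTranspose_fromRows_mul_fromRows_eq_one [DecidableEq n] {T : Matrix n n 𝕜}
    (hT : (1 - Tᴴ * T).PosSemidef) :
    ∃ S : Matrix n n 𝕜, (fromRows T S)ᴴ * fromRows T S = 1 := by
  obtain ⟨S, hS⟩ := hT.exists_eq_conjTranspose_mul_self
  exact ⟨S, by rw [conjTranspose_fromRows_mul_fromRows, ← hS, add_sub_cancel]⟩

end Matrix

/-- any contraction `T` (i.e. `T†T ≤ I`) on `H_d` factors as `T = U†V`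
for isometries `U, V : H_d → H_{2d}`. -/
theorem contraction_as_product_of_isometries {d : ℕ}
    (T : Matrix (Fin d) (Fin d) ℂ) (hT : ((1 : Matrix (Fin d) (Fin d) ℂ) - Tᴴ * T).PosSemidef) :
    ∃ U V : Matrix (Fin (2 * d)) (Fin d) ℂ,
      Uᴴ * U = 1 ∧ Vᴴ * V = 1 ∧ T = Uᴴ * V := by
  obtain ⟨S, hV⟩ := exists_conjTranspose_fromRows_mul_fromRows_eq_one hT
  let e : Fin (2 * d) ≃ Fin d ⊕ Fin d := (finCongr (two_mul d)).trans finSumFinEquiv.symm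
  refine ⟨(fromRows (1 : Matrix (Fin d) (Fin d) ℂ) 0).submatrix e id,
    (fromRows T S).submatrix e id, ?_, ?_, ?_⟩
  · rw [conjTranspose_submatrix_mul_submatrix, conjTranspose_fromRows_one_zero_mul_fromRows]
  · rw [conjTranspose_submatrix_mul_submatrix, hV]
  · rw [conjTranspose_submatrix_mul_submatrix, conjTranspose_fromRows_one_zero_mul_fromRows]
end

section
/- Let D = diag(1 + ai, 1 − ai) with a = tan(θ/2) for some θ ∈ (0, π). Then 0 belongs to the angular numerical range of D^{⊗N} (equivalently, there is a nonzero positive semidefinite operator orthogonal to D^{⊗N}) if and only if N ≥ π/θ. -/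
open Matrix
open scoped ComplexOrder

/-- The numerical range `W(A) = {⟨ψ|A|ψ⟩ : ‖ψ‖ = 1}`. -/
noncomputable def numRange {ι : Type*} [Fintype ι] (A : Matrix ι ι ℂ) : Set ℂ :=
  {z | ∃ ψ : ι → ℂ, star ψ ⬝ᵥ ψ = 1 ∧ z = star ψ ⬝ᵥ A.mulVec ψ}

/-- The angular numerical range `𝒲(A) = ⋃_{t>0} W(tA)`. -/
noncomputable def angNumRange {ι : Type*} [Fintype ι] (A : Matrix ι ι ℂ) : Set ℂ :=
  ⋃ t ∈ Set.Ioi (0 : ℝ), numRange ((t : ℂ) • A)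

/-- The `N`-fold tensor power `A^{⊗N}` as a matrix indexed by `Fin N → Fin d`. -/
noncomputable def tensorPow {d : ℕ} (N : ℕ) (A : Matrix (Fin d) (Fin d) ℂ) :
    Matrix (Fin N → Fin d) (Fin N → Fin d) ℂ :=
  fun j k => ∏ i, A (j i) (k i)

/-!
`D = cos(θ/2)⁻¹ • diag(e^{iθ/2}, e^{-iθ/2})`, so `D^{⊗N}` is a positive multiple of a diagonal
matrix whose entries are the unit vectors `e^{isθ/2}`, `s = N, N - 2, …, -N`. For a diagonal matrix
both conditions say that `0` lies in the convex hull of the diagonal entries: the numerical range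
of a diagonal matrix is that hull, and a positive semidefinite `ρ` only enters through its
diagonal. If `Nθ < π`, all entries lie in the open right half-plane. Otherwise there are entries
at angles `α ∈ [π/2, 3π/2)` and `β ∈ (-π/2, π/2)`; averaging each with its conjugate, which is again
an entry, puts the reals `cos α ≤ 0 ≤ cos β`, hence `0`, into the hull.
-/

open Complex Set ComplexConjugate
open scoped Real

section ConvexHull

variable {𝕜 ι E : Type*} [Field 𝕜] [LinearOrder 𝕜] [IsStrictOrderedRing 𝕜] [Fintype ι]
  [AddCommGroup E] [Module 𝕜 E]

theorem mem_convexHull_range_iff (v : ι → E) (x : E) :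
    x ∈ convexHull 𝕜 (range v) ↔
      ∃ w : ι → 𝕜, (∀ i, 0 ≤ w i) ∧ ∑ i, w i = 1 ∧ ∑ i, w i • v i = x := by
  classical
  constructor
  · rw [convexHull_range_eq_exists_affineCombination]
    rintro ⟨s, w, hw₀, hw₁, rfl⟩
    refine ⟨fun i => if i ∈ s then w i else 0, fun i => ?_, ?_, ?_⟩
    · dsimp only
      split_ifs with hi
      exacts [hw₀ i hi, le_rfl]
    · simpa [Finset.sum_ite_mem] using hw₁
    · simp [ite_smul, Finset.sum_ite_mem, s.affineCombination_eq_linear_combination v w hw₁]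
  · rintro ⟨w, hw₀, hw₁, rfl⟩
    exact mem_convexHull_of_exists_fintype w v hw₀ hw₁ (fun i => mem_range_self i) rfl

theorem zero_mem_convexHull_range_iff (v : ι → E) :
    (0 : E) ∈ convexHull 𝕜 (range v) ↔
      ∃ w : ι → 𝕜, (∀ i, 0 ≤ w i) ∧ w ≠ 0 ∧ ∑ i, w i • v i = 0 := by
  rw [mem_convexHull_range_iff]
  constructor
  · rintro ⟨w, hw₀, hw₁, hv⟩
    refine ⟨w, hw₀, ?_, hv⟩
    rintro rfl
    simp at hw₁
  · rintro ⟨w, hw₀, hw, hv⟩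
    obtain ⟨i, hi⟩ := Function.ne_iff.1 hw
    have hT : 0 < ∑ i, w i :=
      Finset.sum_pos' (fun i _ => hw₀ i) ⟨i, Finset.mem_univ i, (hw₀ i).lt_of_ne' hi⟩
    refine ⟨fun i => w i / ∑ i, w i, fun i => div_nonneg (hw₀ i) hT.le, ?_, ?_⟩
    · rw [← Finset.sum_div, div_self hT.ne']
    · simp_rw [div_eq_inv_mul, mul_smul, ← Finset.smul_sum, hv, smul_zero]

end ConvexHull

theorem zero_mem_convexHull_range_smul_iff {𝕜 ι E : Type*} [Field 𝕜] [LinearOrder 𝕜]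
    [AddCommGroup E] [Module 𝕜 E] {c : 𝕜} (hc : c ≠ 0) (v : ι → E) :
    (0 : E) ∈ convexHull 𝕜 (range (c • v)) ↔ (0 : E) ∈ convexHull 𝕜 (range v) := by
  rw [Pi.smul_def, range_smul, convexHull_smul, zero_mem_smul_set_iff hc]

theorem ofReal_re_mem_convexHull {s : Set ℂ} {z : ℂ} (hz : z ∈ s) (hz' : conj z ∈ s) :
    (z.re : ℂ) ∈ convexHull ℝ s := by
  rw [re_eq_add_conj]
  refine segment_subset_convexHull hz hz' ⟨1 / 2, 1 / 2, by norm_num, by norm_num, by norm_num, ?_⟩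
  simp only [real_smul]
  push_cast
  ring

theorem zero_mem_convexHull_of_ofReal_mem {s : Set ℂ} {x y : ℝ} (hx : (x : ℂ) ∈ convexHull ℝ s)
    (hy : (y : ℂ) ∈ convexHull ℝ s) (hx₀ : x ≤ 0) (hy₀ : 0 ≤ y) : (0 : ℂ) ∈ convexHull ℝ s := by
  have : Convex ℝ ((↑) ⁻¹' convexHull ℝ s : Set ℝ) :=
    (convex_convexHull ℝ s).linear_preimage ofRealAm.toLinearMap
  simpa using this.ordConnected.out hx hy ⟨hx₀, hy₀⟩

theorem zero_notMem_convexHull_of_forall_re_pos {s : Set ℂ} (hs : ∀ z ∈ s, 0 < z.re) :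
    (0 : ℂ) ∉ convexHull ℝ s := fun h =>
  lt_irrefl (0 : ℂ).re (convexHull_min hs (convex_halfSpace_re_gt 0) h)

section Diagonal

variable {ι : Type*} [Fintype ι] [DecidableEq ι]

theorem star_dotProduct_diagonal_mulVec (d ψ : ι → ℂ) :
    star ψ ⬝ᵥ (diagonal d *ᵥ ψ) = ∑ j, normSq (ψ j) • d j := by
  simp only [dotProduct, mulVec_diagonal, Pi.star_apply, real_smul, normSq_eq_conj_mul_self]
  exact Finset.sum_congr rfl fun j _ => by rw [RCLike.star_def]; ring

theorem star_dotProduct_self_eq_sum_normSq (ψ : ι → ℂ) : star ψ ⬝ᵥ ψ = ↑(∑ j, normSq (ψ j)) := by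
  simpa using star_dotProduct_diagonal_mulVec (fun _ => 1) ψ

theorem numRange_diagonal (d : ι → ℂ) : numRange (diagonal d) = convexHull ℝ (range d) := by
  ext z
  rw [mem_convexHull_range_iff]
  constructor
  · rintro ⟨ψ, hψ, rfl⟩
    refine ⟨fun j => normSq (ψ j), fun j => normSq_nonneg _, ?_,
      (star_dotProduct_diagonal_mulVec d ψ).symm⟩
    exact_mod_cast (star_dotProduct_self_eq_sum_normSq ψ).symm.trans hψ
  · rintro ⟨w, hw₀, hw₁, rfl⟩
    have hψ : ∀ j, normSq (Real.sqrt (w j) : ℂ) = w j := fun j => by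
      rw [normSq_ofReal, Real.mul_self_sqrt (hw₀ j)]
    refine ⟨fun j => Real.sqrt (w j), ?_, ?_⟩
    · simp [star_dotProduct_self_eq_sum_normSq, hψ, hw₁]
    · simp only [star_dotProduct_diagonal_mulVec, hψ]

theorem zero_mem_angNumRange_diagonal_iff (d : ι → ℂ) :
    (0 : ℂ) ∈ angNumRange (diagonal d) ↔ (0 : ℂ) ∈ convexHull ℝ (range d) := by
  have hsmul (t : ℝ) : (t : ℂ) • diagonal d = diagonal (t • d) := by
    rw [← diagonal_smul]
    rfl
  simp only [angNumRange, mem_iUnion, mem_Ioi, exists_prop, hsmul, numRange_diagonal]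
  exact ⟨fun ⟨t, ht, h⟩ => (zero_mem_convexHull_range_smul_iff ht.ne' d).1 h,
    fun h => ⟨1, one_pos, by rwa [one_smul]⟩⟩

theorem trace_conjTranspose_diagonal_mul {ρ : Matrix ι ι ℂ} (hρ : ρ.IsHermitian) (d : ι → ℂ) :
    ((diagonal d)ᴴ * ρ).trace = star (∑ j, (ρ j j).re • d j) := by
  simp only [diagonal_conjTranspose, trace, diag, diagonal_mul, star_sum, Pi.star_apply]
  refine Finset.sum_congr rfl fun j _ => ?_
  rw [real_smul, star_mul', star_def, conj_ofReal, mul_comm]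
  exact congrArg (· * _) (hρ.coe_re_apply_self j).symm

theorem exists_posSemidef_orthogonal_diagonal_iff (d : ι → ℂ) :
    (∃ ρ : Matrix ι ι ℂ, ρ.PosSemidef ∧ ρ ≠ 0 ∧ ((diagonal d)ᴴ * ρ).trace = 0) ↔
      (0 : ℂ) ∈ convexHull ℝ (range d) := by
  rw [zero_mem_convexHull_range_iff]
  constructor
  · rintro ⟨ρ, hρ, hρ₀, htr⟩
    refine ⟨fun j => (ρ j j).re, fun j => (Complex.nonneg_iff.1 hρ.diag_nonneg).1, ?_, ?_⟩
    · intro hw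
      refine hρ₀ (hρ.trace_eq_zero_iff.1 (Finset.sum_eq_zero fun j _ => ?_))
      rw [diag_apply, ← hρ.1.coe_re_apply_self j]
      exact congrArg _ (congrFun hw j)
    · rwa [trace_conjTranspose_diagonal_mul hρ.1, star_eq_zero] at htr
  · rintro ⟨w, hw₀, hw, hv⟩
    have hρ : (diagonal fun j => (w j : ℂ)).PosSemidef := .diagonal fun j => zero_le_real.2 (hw₀ j)
    refine ⟨_, hρ, ?_, ?_⟩
    · simpa [funext_iff] using hw
    · simp only [trace_conjTranspose_diagonal_mul hρ.1, diagonal_apply_eq, ofReal_re, hv, star_zero]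

end Diagonal

theorem tensorPow_diagonal {d N : ℕ} (v : Fin d → ℂ) :
    tensorPow N (diagonal v) = diagonal fun j => ∏ i, v (j i) := by
  ext j k
  by_cases h : j = k
  · subst h
    simp [tensorPow]
  · obtain ⟨i, hi⟩ := Function.ne_iff.1 h
    rw [diagonal_apply_ne _ h]
    exact Finset.prod_eq_zero (Finset.mem_univ i) (diagonal_apply_ne _ hi)

theorem one_add_tan_mul_I {x : ℝ} (hx : Real.cos x ≠ 0) :
    1 + (Real.tan x : ℂ) * I = (Real.cos x : ℂ)⁻¹ * exp (x * I) := by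
  have hx' : cos (x : ℂ) ≠ 0 := by exact_mod_cast hx
  rw [exp_mul_I, Real.tan_eq_sin_div_cos, ofReal_div, ofReal_cos, ofReal_sin]
  field_simp

def signSum {N : ℕ} (j : Fin N → Fin 2) : ℝ :=
  ∑ i, ![1, -1] (j i)

noncomputable def phases (N : ℕ) (φ : ℝ) (j : Fin N → Fin 2) : ℂ :=
  exp (↑(signSum j * φ) * I)

theorem tensorPow_diagonal_one_add_tan {x : ℝ} (hx : Real.cos x ≠ 0) (N : ℕ) :
    tensorPow N (diagonal ![1 + (Real.tan x : ℂ) * I, 1 - (Real.tan x : ℂ) * I]) =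
      diagonal ((Real.cos x)⁻¹ ^ N • phases N x) := by
  have hv (m : Fin 2) : ![1 + (Real.tan x : ℂ) * I, 1 - (Real.tan x : ℂ) * I] m =
      (Real.cos x : ℂ)⁻¹ * exp (↑(![1, -1] m * x) * I) := by
    fin_cases m
    · simpa using one_add_tan_mul_I hx
    · simpa [sub_eq_add_neg] using one_add_tan_mul_I (x := -x) (by rwa [Real.cos_neg])
  rw [tensorPow_diagonal]
  congr 1
  ext j
  simp only [hv, Finset.prod_mul_distrib, Finset.prod_const, Finset.card_univ, Fintype.card_fin,
    ← exp_sum, Pi.smul_apply, phases, signSum, real_smul]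
  push_cast [Finset.sum_mul]
  rfl

theorem abs_signSum_le {N : ℕ} (j : Fin N → Fin 2) : |signSum j| ≤ N := by
  have hs (m : Fin 2) : |![(1 : ℝ), -1] m| = 1 := by fin_cases m <;> simp
  calc |signSum j| ≤ ∑ i, |![(1 : ℝ), -1] (j i)| := Finset.abs_sum_le_sum_abs _ _
    _ = N := by simp [hs]

theorem signSum_rev_comp {N : ℕ} (j : Fin N → Fin 2) : signSum (Fin.rev ∘ j) = -signSum j := by
  have hs (m : Fin 2) : ![(1 : ℝ), -1] m.rev = -![(1 : ℝ), -1] m := by fin_cases m <;> simp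
  simp [signSum, hs]

theorem exists_signSum_eq {N k : ℕ} (hk : k ≤ N) :
    ∃ j : Fin N → Fin 2, signSum j = 2 * k - N := by
  refine ⟨fun i => if (i : ℕ) < k then 0 else 1, ?_⟩
  have hs (i : Fin N) : ![(1 : ℝ), -1] (if (i : ℕ) < k then 0 else 1) =
      if (i : ℕ) < k then 1 else -1 := by split_ifs <;> simp
  have hcard : (Finset.univ.filter fun i : Fin N => ¬ (i : ℕ) < k).card = N - k := by
    rw [Finset.filter_not, Finset.card_sdiff_of_subset (Finset.filter_subset _ _),
      Fin.card_filter_val_lt, Finset.card_univ, Fintype.card_fin, min_eq_right hk]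
  simp only [signSum, hs, Finset.sum_ite, Finset.sum_const, nsmul_eq_mul, hcard,
    Fin.card_filter_val_lt, min_eq_right hk, Nat.cast_sub hk]
  ring

theorem conj_phases {N : ℕ} (φ : ℝ) (j : Fin N → Fin 2) :
    conj (phases N φ j) = phases N φ (Fin.rev ∘ j) := by
  rw [phases, phases, ← exp_conj, map_mul, conj_ofReal, conj_I, signSum_rev_comp]
  push_cast
  ring_nf

theorem re_phases {N : ℕ} (φ : ℝ) (j : Fin N → Fin 2) :
    (phases N φ j).re = Real.cos (signSum j * φ) :=
  exp_ofReal_mul_I_re _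

theorem zero_notMem_convexHull_phases {N : ℕ} {φ : ℝ} (hφ : 0 ≤ φ) (hN : N * φ < π / 2) :
    (0 : ℂ) ∉ convexHull ℝ (range (phases N φ)) := by
  refine zero_notMem_convexHull_of_forall_re_pos ?_
  rintro _ ⟨j, rfl⟩
  have hlt : |signSum j * φ| < π / 2 := by
    rw [abs_mul, abs_of_nonneg hφ]
    exact (mul_le_mul_of_nonneg_right (abs_signSum_le j) hφ).trans_lt hN
  rw [re_phases]
  exact Real.cos_pos_of_mem_Ioo ⟨by linarith [neg_abs_le (signSum j * φ)],
    (le_abs_self _).trans_lt hlt⟩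

theorem ofReal_cos_mem_convexHull_phases {N k : ℕ} (hk : k ≤ N) (φ : ℝ) :
    (Real.cos ((2 * k - N) * φ) : ℂ) ∈ convexHull ℝ (range (phases N φ)) := by
  obtain ⟨j, hj⟩ := exists_signSum_eq hk
  rw [← hj, ← re_phases]
  exact ofReal_re_mem_convexHull (mem_range_self j) (conj_phases φ j ▸ mem_range_self _)

theorem exists_two_mul_sub_mul_mem_Ico {N : ℕ} {φ a : ℝ} (hφ : 0 < φ)
    (ha : a ∈ Icc (-(N * φ)) (N * φ)) : ∃ k ≤ N, (2 * k - N : ℝ) * φ ∈ Ico a (a + 2 * φ) := by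
  have ha₁ : -(N : ℝ) ≤ a / φ := by rw [le_div_iff₀ hφ]; linarith [ha.1]
  have ha₂ : a / φ ≤ N := (div_le_iff₀ hφ).2 ha.2
  have hk₁ := Nat.le_ceil ((N + a / φ) / 2)
  have hk₂ := Nat.ceil_lt_add_one (show 0 ≤ (N + a / φ) / 2 by linarith)
  refine ⟨⌈(N + a / φ) / 2⌉₊, Nat.ceil_le.2 (by linarith), ?_, ?_⟩
  · rw [← div_le_iff₀ hφ]; linarith
  · rw [← lt_div_iff₀ hφ, show (a + 2 * φ) / φ = a / φ + 2 by field_simp]; linarith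

theorem zero_mem_convexHull_phases {N : ℕ} {φ : ℝ} (hφ : φ ∈ Ioo 0 (π / 2)) (hN : π / 2 ≤ N * φ) :
    (0 : ℂ) ∈ convexHull ℝ (range (phases N φ)) := by
  obtain ⟨hφ₀, hφπ⟩ := hφ
  obtain ⟨k, hkN, hα₁, hα₂⟩ := exists_two_mul_sub_mul_mem_Ico (N := N) (a := π / 2) hφ₀
    ⟨by linarith [Real.pi_pos], hN⟩
  obtain ⟨m, hmN, hβ₁, hβ₂⟩ := exists_two_mul_sub_mul_mem_Ico (N := N) (a := -φ) hφ₀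
    ⟨by linarith, by linarith⟩
  exact zero_mem_convexHull_of_ofReal_mem (ofReal_cos_mem_convexHull_phases hkN φ)
    (ofReal_cos_mem_convexHull_phases hmN φ)
    (Real.cos_nonpos_of_pi_div_two_le_of_le hα₁ (by linarith))
    (Real.cos_nonneg_of_mem_Icc ⟨by linarith, by linarith⟩)

theorem zero_mem_convexHull_phases_iff {N : ℕ} {φ : ℝ} (hφ : φ ∈ Ioo 0 (π / 2)) :
    (0 : ℂ) ∈ convexHull ℝ (range (phases N φ)) ↔ π / 2 ≤ N * φ :=
  ⟨fun h => not_lt.1 fun hN => zero_notMem_convexHull_phases hφ.1.le hN h,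
    zero_mem_convexHull_phases hφ⟩

/-- for `D = diag(1 + ai, 1 − ai)` with `a = tan(θ/2)`, `θ ∈ (0,π)`,
`0 ∈ 𝒲(D^{⊗N})` (equivalently, some nonzero positive semidefinite operator is
orthogonal to `D^{⊗N}`) iff `N ≥ π/θ`. -/
theorem diag_tensor_power_zero_in_angular_range {θ : ℝ} (hθ : θ ∈ Set.Ioo 0 Real.pi)
    (a : ℝ) (ha : a = Real.tan (θ / 2))
    (D : Matrix (Fin 2) (Fin 2) ℂ)
    (hD : D = Matrix.diagonal ![1 + a * Complex.I, 1 - a * Complex.I]) (N : ℕ) :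
    ((0 : ℂ) ∈ angNumRange (tensorPow N D) ↔ Real.pi / θ ≤ (N : ℝ)) ∧
    ((∃ ρ : Matrix (Fin N → Fin 2) (Fin N → Fin 2) ℂ,
        ρ.PosSemidef ∧ ρ ≠ 0 ∧ ((tensorPow N D)ᴴ * ρ).trace = 0) ↔ Real.pi / θ ≤ (N : ℝ)) := by
  obtain ⟨hθ₀, hθπ⟩ := hθ
  subst ha hD
  have hφ : θ / 2 ∈ Ioo 0 (π / 2) := ⟨by positivity, by linarith⟩
  have hcos : 0 < Real.cos (θ / 2) := Real.cos_pos_of_mem_Ioo ⟨by linarith, hφ.2⟩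
  have hN : π / 2 ≤ N * (θ / 2) ↔ π / θ ≤ N := by
    rw [div_le_iff₀ hθ₀]
    constructor <;> intro h <;> linarith
  rw [tensorPow_diagonal_one_add_tan hcos.ne', zero_mem_angNumRange_diagonal_iff,
    exists_posSemidef_orthogonal_diagonal_iff,
    zero_mem_convexHull_range_smul_iff (pow_ne_zero N (inv_ne_zero hcos.ne')),
    zero_mem_convexHull_phases_iff hφ, hN, and_self]
end

section
/- Let H_3 have orthonormal basis {|0⟩,|1⟩,|2⟩}, and let A_1 = |0⟩⟨0| + i|1⟩⟨1|, A_2 = |1⟩⟨1| + i|2⟩⟨2|, S = span{A_1, A_2}. Then for every positive integer N, there is no nonzero positive semidefinite operator ρ on H_3^{⊗N} satisfying Tr(ρ·M) = 0 for all M ∈ S^{⊗N}, even though S contains no positive definite operator. -/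
open Matrix
open scoped ComplexOrder

/-- The `N`-fold tensor (Kronecker) power: the tensor product `A 0 ⊗ ⋯ ⊗ A (N-1)`
realized as a matrix indexed by `Fin N → Fin d`. -/
noncomputable def tensorProd {d N : ℕ} (A : Fin N → Matrix (Fin d) (Fin d) ℂ) :
    Matrix (Fin N → Fin d) (Fin N → Fin d) ℂ :=
  fun j k => ∏ i, A i (j i) (k i)

/-- `S^{⊗N}`: the span of all `A_1 ⊗ ⋯ ⊗ A_N` with each `A_i ∈ S`. -/
noncomputable def tensorPowSpan {d : ℕ} (S : Submodule ℂ (Matrix (Fin d) (Fin d) ℂ)) (N : ℕ) :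
    Submodule ℂ (Matrix (Fin N → Fin d) (Fin N → Fin d) ℂ) :=
  Submodule.span ℂ {M | ∃ A : Fin N → Matrix (Fin d) (Fin d) ℂ, (∀ i, A i ∈ S) ∧ M = tensorProd A}

/-!
Only the diagonal of `ρ` is seen by the diagonal operators in `S^{⊗N}`, and pairing it with
`⊗ᵢ diag vᵢ`, `vᵢ ∈ {(1, i, 0), (0, 1, i)}`, gives a family of "moments" of the nonnegative weight
`p = diag ρ`. Splitting off the first tensor factor, the moments `Tₖ` of the slices `p(k, ·)`
satisfy `T₀ + i T₁ = 0` and `T₁ + i T₂ = 0`, hence `T₀ + T₂ = 0`. By induction the nonnegative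
weight `p(0, ·) + p(2, ·)` vanishes, so `p(0, ·) = p(2, ·) = 0`; then `T₁ = 0` and `p(1, ·) = 0`.
A positive semidefinite matrix with zero diagonal is zero.
-/

open Complex

section Moment

variable {ι : Type*} {d N : ℕ}

noncomputable def moment (w : ι → Fin d → ℂ) (p : (Fin N → Fin d) → ℂ) (ε : Fin N → ι) : ℂ :=
  ∑ j, p j * ∏ i, w (ε i) (j i)

theorem moment_add (w : ι → Fin d → ℂ) (p q : (Fin N → Fin d) → ℂ) (ε : Fin N → ι) :
    moment w (p + q) ε = moment w p ε + moment w q ε := by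
  simp only [moment, Pi.add_apply, add_mul, Finset.sum_add_distrib]

theorem moment_zero (w : ι → Fin d → ℂ) (ε : Fin N → ι) : moment w 0 ε = 0 := by
  simp [moment]

theorem moment_cons (w : ι → Fin d → ℂ) (p : (Fin (N + 1) → Fin d) → ℂ) (e : ι)
    (ε : Fin N → ι) :
    moment w p (Fin.cons e ε) = ∑ k, w e k * moment w (fun j => p (Fin.cons k j)) ε := by
  rw [moment, ← (Fin.consEquiv fun _ => Fin d).sum_comp, Fintype.sum_prod_type]
  refine Finset.sum_congr rfl fun k _ => ?_
  rw [moment, Finset.mul_sum]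
  refine Finset.sum_congr rfl fun j _ => ?_
  simp only [Fin.consEquiv, Equiv.coe_fn_mk, Fin.prod_univ_succ, Fin.cons_zero, Fin.cons_succ]
  ring

theorem trace_mul_tensorProd_diagonal (ρ : Matrix (Fin N → Fin d) (Fin N → Fin d) ℂ)
    (w : ι → Fin d → ℂ) (ε : Fin N → ι) :
    (ρ * tensorProd fun i => diagonal (w (ε i))).trace = moment w ρ.diag ε := by
  have : (tensorProd fun i => diagonal (w (ε i))) = diagonal fun j => ∏ i, w (ε i) (j i) := by
    ext j k
    simp only [tensorProd, diagonal_apply, Finset.prod_ite_zero, Finset.mem_univ, true_imp_iff,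
      funext_iff]
  simp [this, trace, moment, mul_diagonal]

end Moment

def weight : Fin 2 → Fin 3 → ℂ := ![![1, I, 0], ![0, 1, I]]

theorem eq_zero_of_nonneg_of_moment_weight_eq_zero {N : ℕ} {p : (Fin N → Fin 3) → ℂ}
    (hp : ∀ j, 0 ≤ p j) (hmoment : ∀ ε, moment weight p ε = 0) : p = 0 := by
  induction N with
  | zero =>
    funext j
    have h := hmoment default
    simp only [moment, Fintype.sum_unique, Finset.univ_eq_empty, Finset.prod_empty, mul_one] at h
    exact (congrArg p (Subsingleton.elim _ _)).trans h
  | succ N ih =>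
    set q : Fin 3 → (Fin N → Fin 3) → ℂ := fun k j => p (Fin.cons k j)
    have hq_nonneg : ∀ k j, 0 ≤ q k j := fun k j => hp _
    have h01 : ∀ ε, moment weight (q 0) ε + I * moment weight (q 1) ε = 0 := fun ε => by
      simpa [moment_cons, Fin.sum_univ_three, weight] using hmoment (Fin.cons 0 ε)
    have h12 : ∀ ε, moment weight (q 1) ε + I * moment weight (q 2) ε = 0 := fun ε => by
      simpa [moment_cons, Fin.sum_univ_three, weight] using hmoment (Fin.cons 1 ε)
    -- `T₀ = -i T₁ = -T₂` for the moments `Tₖ` of `q k`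
    have h02 : q 0 + q 2 = 0 := ih (fun j => add_nonneg (hq_nonneg 0 j) (hq_nonneg 2 j)) fun ε => by
      rw [moment_add]
      linear_combination h01 ε - I * h12 ε + (moment weight (q 2) ε) * I_sq
    have hq0 : q 0 = 0 := by
      funext j
      exact ((add_eq_zero_iff_of_nonneg (hq_nonneg 0 j) (hq_nonneg 2 j)).mp (congrFun h02 j)).1
    have hq2 : q 2 = 0 := by
      simpa [hq0] using h02
    have hq1 : q 1 = 0 := ih (hq_nonneg 1) fun ε => by
      simpa [hq2, moment_zero] using h12 ε
    have hq : ∀ k, q k = 0 := by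
      intro k; fin_cases k <;> assumption
    funext j
    simpa [q] using congrFun (hq (j 0)) (Fin.tail j)

theorem not_posDef_smul_add_smul (a b : ℂ) :
    ¬ (a • diagonal ![1, I, 0] + b • diagonal ![0, 1, I]).PosDef := by
  intro h
  have h0 : 0 < a := by simpa using h.diag_pos (i := 0)
  have h1 : 0 < a * I + b := by simpa using h.diag_pos (i := 1)
  have h2 : 0 < b * I := by simpa using h.diag_pos (i := 2)
  -- the real part of `a i + b` is `Re b - Im a`, which vanishes since `a` and `b i` are real
  rw [Complex.lt_def] at h0 h1 h2
  simp only [zero_re, zero_im, add_re, add_im, mul_re, mul_im, I_re, I_im, mul_zero, mul_one,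
    zero_sub, add_zero, lt_neg_add_iff_add_lt, Left.neg_pos_iff] at h0 h1 h2
  linarith [h0.2, h1.1, h2.2]

/-- for `A_1 = |0⟩⟨0| + i|1⟩⟨1|`, `A_2 = |1⟩⟨1| + i|2⟩⟨2|` and
`S = span{A_1, A_2}`, no tensor power `S^{⊗N}` admits a nonzero positive semidefinite
operator in its orthogonal complement, even though `S` contains no positive definite
operator. -/
theorem counterexample_no_parallel_distinguishability
    (A₁ A₂ : Matrix (Fin 3) (Fin 3) ℂ)
    (hA₁ : A₁ = Matrix.diagonal ![1, Complex.I, 0])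
    (hA₂ : A₂ = Matrix.diagonal ![0, 1, Complex.I])
    (S : Submodule ℂ (Matrix (Fin 3) (Fin 3) ℂ))
    (hS : S = Submodule.span ℂ {A₁, A₂}) :
    (¬ ∃ P ∈ S, P.PosDef) ∧
    ∀ N : ℕ, 1 ≤ N →
      ¬ ∃ ρ : Matrix (Fin N → Fin 3) (Fin N → Fin 3) ℂ,
        ρ.PosSemidef ∧ ρ ≠ 0 ∧ ∀ M ∈ tensorPowSpan S N, (ρ * M).trace = 0 := by
  subst hA₁ hA₂ hS
  refine ⟨fun ⟨P, hP, hPD⟩ => ?_, fun N _ ⟨ρ, hρ, hne, horth⟩ => hne ?_⟩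
  · obtain ⟨a, b, rfl⟩ := Submodule.mem_span_pair.mp hP
    exact not_posDef_smul_add_smul a b hPD
  · have hweight : ∀ e, diagonal (weight e) ∈
        Submodule.span ℂ {diagonal ![1, I, 0], diagonal ![0, 1, I]} := fun e => by
      apply Submodule.subset_span
      fin_cases e
      exacts [Set.mem_insert _ _, Set.mem_insert_of_mem _ rfl]
    have hdiag : ρ.diag = 0 := eq_zero_of_nonneg_of_moment_weight_eq_zero
      (fun _ => hρ.diag_nonneg) fun ε => by
        rw [← trace_mul_tensorProd_diagonal]
        exact horth _ (Submodule.subset_span ⟨_, fun i => hweight (ε i), rfl⟩)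
    exact hρ.trace_eq_zero_iff.mp (by rw [trace, hdiag, Pi.zero_def, Finset.sum_const_zero])
end

section
/- Let A_α = the 2×3 complex matrix with rows (1, e^{iα}, 0) and (0, 1, e^{iα}). For α ∈ [3π/4, π], the vector x ∈ ℝ^9 with entries x = (1, −cos α, cos 2α, −cos α, 1, −cos α, cos 2α, −cos α, 1) is a nonzero nonnegative solution of (A_α ⊗ A_α)x = 0. Conversely, for α ∈ [π/2, 3π/4), the system (A_α ⊗ A_α)x = 0 has no nonzero nonnegative real solution. -/
open Matrix Kronecker

lemma kron_key (α : ℝ) :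
    Complex.exp (α * Complex.I) ^ 2 - 2 * Complex.cos α * Complex.exp (α * Complex.I) + 1 = 0 := by
  rw [Complex.exp_mul_I]
  linear_combination ((Complex.sin α) ^ 2) * Complex.I_sq - Complex.sin_sq_add_cos_sq (α : ℂ)

set_option maxHeartbeats 1600000 in
/-- for `A_α = [[1, e^{iα}, 0], [0, 1, e^{iα}]]`, the explicit vector
`x = (1, −cos α, cos 2α, −cos α, 1, −cos α, cos 2α, −cos α, 1)` is a nonzero nonnegative
solution of `(A_α ⊗ A_α) x = 0` when `α ∈ [3π/4, π]`; for `α ∈ [π/2, 3π/4)` no nonzero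
nonnegative solution exists. -/
theorem kron_system_nonneg_solutions (α : ℝ)
    (A : Matrix (Fin 2) (Fin 3) ℂ)
    (hA : A = !![1, Complex.exp (α * Complex.I), 0; 0, 1, Complex.exp (α * Complex.I)])
    (x : Fin 3 × Fin 3 → ℝ)
    (hx : x = fun p =>
      !![1, -Real.cos α, Real.cos (2 * α);
         -Real.cos α, 1, -Real.cos α;
         Real.cos (2 * α), -Real.cos α, 1] p.1 p.2) :
    (α ∈ Set.Icc (3 * Real.pi / 4) Real.pi →
      (∀ p, 0 ≤ x p) ∧ x ≠ 0 ∧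
        (A ⊗ₖ A).mulVec (fun p => (x p : ℂ)) = 0) ∧
    (α ∈ Set.Ico (Real.pi / 2) (3 * Real.pi / 4) →
      ¬ ∃ y : Fin 3 × Fin 3 → ℝ, (∀ p, 0 ≤ y p) ∧ y ≠ 0 ∧
        (A ⊗ₖ A).mulVec (fun p => (y p : ℂ)) = 0) := by
  have hπ := Real.pi_pos
  have hcos34 : Real.cos (3 * Real.pi / 4) = -(Real.sqrt 2 / 2) := by
    rw [show (3 * Real.pi / 4 : ℝ) = Real.pi - Real.pi / 4 by ring, Real.cos_pi_sub,
      Real.cos_pi_div_four]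
  have hsqrt2 : Real.sqrt 2 ^ 2 = 2 := Real.sq_sqrt (by norm_num)
  subst hA hx
  constructor
  · rintro ⟨hge, hle⟩
    have hc : Real.cos α ≤ 0 :=
      Real.cos_nonpos_of_pi_div_two_le_of_le (by linarith) (by linarith)
    have hcle : Real.cos α ≤ -(Real.sqrt 2 / 2) := by
      rw [← hcos34]
      exact Real.cos_le_cos_of_nonneg_of_le_pi (by linarith) hle hge
    have h2 : 0 ≤ Real.cos (2 * α) := by
      rw [Real.cos_two_mul]
      nlinarith [Real.sqrt_nonneg 2]
    refine ⟨?_, ?_, ?_⟩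
    · rintro ⟨i, j⟩
      fin_cases i <;> fin_cases j <;> simp <;> linarith
    · intro h
      have := congrFun h (0, 0)
      simp at this
    · funext p
      obtain ⟨i, j⟩ := p
      fin_cases i <;> fin_cases j <;>
        simp [Matrix.mulVec, dotProduct, Fintype.sum_prod_type, Fin.sum_univ_three,
          kroneckerMap_apply, Real.cos_two_mul] <;>
        first
          | linear_combination kron_key α
          | linear_combination (-(Complex.cos (α : ℂ))) * kron_key α
  · rintro ⟨hge, hlt⟩ ⟨y, hy0, hyne, hyker⟩
    have hs : 0 < Real.sin α :=
      Real.sin_pos_of_pos_of_lt_pi (by linarith) (by linarith)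
    have hcle : Real.cos α ≤ 0 :=
      Real.cos_nonpos_of_pi_div_two_le_of_le hge (by linarith)
    have hcgt : -(Real.sqrt 2 / 2) < Real.cos α := by
      rw [← hcos34]
      exact Real.cos_lt_cos_of_nonneg_of_le_pi (by linarith) (by linarith) hlt
    have hc2 : Real.cos α ^ 2 < 1 / 2 := by
      nlinarith [Real.sqrt_nonneg 2]
    have hpyth : Real.sin α ^ 2 + Real.cos α ^ 2 = 1 := Real.sin_sq_add_cos_sq α
    have h00 := congrFun hyker (0, 0)
    have h01 := congrFun hyker (0, 1)
    have h10 := congrFun hyker (1, 0)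
    have h11 := congrFun hyker (1, 1)
    simp [Matrix.mulVec, dotProduct, Fintype.sum_prod_type, Fin.sum_univ_three,
      kroneckerMap_apply, Complex.exp_mul_I, Complex.ext_iff,
      Complex.cos_ofReal_re, Complex.sin_ofReal_re] at h00 h01 h10 h11
    -- imaginary parts, divided by sin α
    have d1 : y (0, 1) + y (1, 0) + 2 * Real.cos α * y 1 = 0 := by
      have h : Real.sin α * (y (0, 1) + y (1, 0) + 2 * Real.cos α * y 1) = 0 := by
        linear_combination h00.2
      exact (mul_eq_zero.mp h).resolve_left hs.ne'
    have d2 : y (0, 2) + y 1 + 2 * Real.cos α * y (1, 2) = 0 := by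
      have h : Real.sin α * (y (0, 2) + y 1 + 2 * Real.cos α * y (1, 2)) = 0 := by
        linear_combination h01.2
      exact (mul_eq_zero.mp h).resolve_left hs.ne'
    have d3 : y 1 + y (2, 0) + 2 * Real.cos α * y (2, 1) = 0 := by
      have h : Real.sin α * (y 1 + y (2, 0) + 2 * Real.cos α * y (2, 1)) = 0 := by
        linear_combination h10.2
      exact (mul_eq_zero.mp h).resolve_left hs.ne'
    have d4 : y (1, 2) + y (2, 1) + 2 * Real.cos α * y (2, 2) = 0 := by
      have h : Real.sin α * (y (1, 2) + y (2, 1) + 2 * Real.cos α * y (2, 2)) = 0 := by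
        linear_combination h11.2
      exact (mul_eq_zero.mp h).resolve_left hs.ne'
    -- real parts combined with Pythagoras
    have e1 : y 0 = y 1 := by
      linear_combination h00.1 - Real.cos α * d1 + y 1 * hpyth
    have e2 : y (0, 1) = y (1, 2) := by
      linear_combination h01.1 - Real.cos α * d2 + y (1, 2) * hpyth
    have e3 : y (1, 0) = y (2, 1) := by
      linear_combination h10.1 - Real.cos α * d3 + y (2, 1) * hpyth
    have e4 : y 1 = y (2, 2) := by
      linear_combination h11.1 - Real.cos α * d4 + y (2, 2) * hpyth
    have hdu : y (0, 2) + y (2, 0) = 2 * (2 * Real.cos α ^ 2 - 1) * y 1 := by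
      linear_combination d2 + d3 - 2 * Real.cos α * d4 - 4 * Real.cos α ^ 2 * e4
    have hprod : 0 ≤ (2 * Real.cos α ^ 2 - 1) * y 1 := by
      linarith [hdu, hy0 (0, 2), hy0 (2, 0)]
    have hprod2 : (2 * Real.cos α ^ 2 - 1) * y 1 ≤ 0 :=
      mul_nonpos_of_nonpos_of_nonneg (by linarith) (hy0 1)
    have hq : y 1 = 0 :=
      (mul_eq_zero.mp (le_antisymm hprod2 hprod)).resolve_left (by intro h; nlinarith)
    have hcq : Real.cos α * y 1 = 0 := by rw [hq, mul_zero]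
    have hb : y (0, 1) = 0 := by linarith [d1, hy0 (0, 1), hy0 (1, 0)]
    have hp : y (1, 0) = 0 := by linarith [d1, hy0 (0, 1), hy0 (1, 0)]
    have hr : y (1, 2) = 0 := by linarith [e2]
    have hv : y (2, 1) = 0 := by linarith [e3]
    have hcr : Real.cos α * y (1, 2) = 0 := by rw [hr, mul_zero]
    have hcv : Real.cos α * y (2, 1) = 0 := by rw [hv, mul_zero]
    have hd : y (0, 2) = 0 := by linarith [d2]
    have hu : y (2, 0) = 0 := by linarith [d3]
    have ha : y 0 = 0 := by linarith [e1]
    have hw : y (2, 2) = 0 := by linarith [e4]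
    apply hyne
    funext p
    obtain ⟨i, j⟩ := p
    fin_cases i <;> fin_cases j <;> simp only [Pi.zero_apply] <;>
      first
        | exact ha | exact hb | exact hd | exact hp | exact hq
        | exact hr | exact hu | exact hv | exact hw
end

section
/- Let α ∈ [2π/3, 3π/4] and let S_α = span{A_1, A_2} with A_1 = diag(1, e^{iα}, 0) and A_2 = diag(0, 1, e^{iα}) acting on H_3. Then the diagonal operator ρ on H_3^{⊗3} whose entry at position (j_1,j_2,j_3) ∈ {0,1,2}^3 equals (k_0! k_1! k_2!/3!)·p_{k_0,k_1,k_2} — where k_i counts occurrences of i among (j_1,j_2,j_3), p_{0,3,0}=0, p_{3,0,0}=p_{0,0,3}=p_{1,2,0}=p_{0,2,1}=sin α, p_{2,1,0}=p_{0,1,2}=−sin 2α, p_{1,1,1}=−2 sin 2α, p_{1,0,2}=p_{2,0,1}=sin 3α — is a nonzero positive semidefinite operator satisfying Tr(ρ·B_1⊗B_2⊗B_3) = 0 for all B_i ∈ {A_1, A_2}. -/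
open Matrix
open scoped ComplexOrder

/-- Number of occurrences of the value `i` in the index tuple `j`. -/
def occCount {N : ℕ} (j : Fin N → Fin 3) (i : Fin 3) : ℕ :=
  (Finset.univ.filter fun t => j t = i).card

/-- The coefficients `p_{k₀,k₁,k₂}` for `N = 3`. -/
noncomputable def p3 (α : ℝ) : ℕ → ℕ → ℕ → ℝ
  | 3, 0, 0 => Real.sin α
  | 0, 0, 3 => Real.sin α
  | 1, 2, 0 => Real.sin α
  | 0, 2, 1 => Real.sin α
  | 2, 1, 0 => -Real.sin (2 * α)
  | 0, 1, 2 => -Real.sin (2 * α)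
  | 1, 1, 1 => -2 * Real.sin (2 * α)
  | 1, 0, 2 => Real.sin (3 * α)
  | 2, 0, 1 => Real.sin (3 * α)
  | _, _, _ => 0

lemma occCount_vec : ∀ a b c i : Fin 3, occCount ![a,b,c] i =
    (if a = i then 1 else 0) + (if b = i then 1 else 0) + (if c = i then 1 else 0) := by
  decide

lemma occ_mem : ∀ j : Fin 3 → Fin 3,
    (occCount j 0, occCount j 1, occCount j 2) ∈
      ([(3,0,0),(0,3,0),(0,0,3),(2,1,0),(2,0,1),(1,2,0),(0,2,1),(1,0,2),(0,1,2),(1,1,1)] :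
        List (ℕ × ℕ × ℕ)) := by
  decide

def e3 : (Fin 3 × Fin 3 × Fin 3) ≃ (Fin 3 → Fin 3) where
  toFun x := ![x.1, x.2.1, x.2.2]
  invFun j := (j 0, j 1, j 2)
  left_inv := by decide
  right_inv := by decide

lemma sum_pi3 (f : (Fin 3 → Fin 3) → ℂ) :
    ∑ j, f j = ∑ a : Fin 3, ∑ b : Fin 3, ∑ c : Fin 3, f ![a,b,c] := by
  rw [← e3.sum_comp, Fintype.sum_prod_type]
  congr 1; ext a
  rw [Fintype.sum_prod_type]; rfl

lemma trace_diag_mul {n : Type*} [Fintype n] [DecidableEq n] (d : n → ℂ) (M : Matrix n n ℂ) :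
    (Matrix.diagonal d * M).trace = ∑ i, d i * M i i := by
  simp [Matrix.trace, Matrix.diag, Matrix.mul_apply, Matrix.diagonal]

lemma trace_diag_mul_pi (d : (Fin 3 → Fin 3) → ℂ) (M : Matrix (Fin 3 → Fin 3) (Fin 3 → Fin 3) ℂ) :
    (Matrix.diagonal d * M).trace
      = ∑ a : Fin 3, ∑ b : Fin 3, ∑ c : Fin 3, d ![a,b,c] * M ![a,b,c] ![a,b,c] := by
  rw [trace_diag_mul]; exact sum_pi3 _

lemma key1 (α : ℝ) :
    Complex.sin α - Complex.sin (2*α) * Complex.exp (α*Complex.I)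
      + Complex.sin α * Complex.exp (α*Complex.I)^2 = 0 := by
  rw [Complex.sin_two_mul, Complex.exp_mul_I]
  linear_combination (-Complex.sin α) * Complex.sin_sq_add_cos_sq α
    + (Complex.sin α)^3 * Complex.I_sq

lemma key2 (α : ℝ) :
    -Complex.sin (2*α) + Complex.sin α * Complex.exp (α*Complex.I)
      + Complex.sin (3*α) * Complex.exp (α*Complex.I)
      - Complex.sin (2*α) * Complex.exp (α*Complex.I)^2 = 0 := by
  rw [Complex.sin_two_mul, Complex.sin_three_mul, Complex.exp_mul_I]
  linear_combination (-2*Complex.sin α*Complex.cos α - 4*(Complex.sin α)^2*Complex.I)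
      * Complex.sin_sq_add_cos_sq α
    + (-2*(Complex.sin α)^3*Complex.cos α) * Complex.I_sq

set_option maxHeartbeats 4000000 in
/-- for `α ∈ [2π/3, 3π/4]`, the explicit diagonal operator `ρ` on
`H_3^{⊗3}` with entries `(k₀! k₁! k₂!/3!) p_{k₀,k₁,k₂}` is a nonzero positive
semidefinite operator orthogonal to every `B₁ ⊗ B₂ ⊗ B₃` with `B_i ∈ {A_1, A_2}`. -/
theorem explicit_solution_three_copies (α : ℝ)
    (hα : α ∈ Set.Icc (2 * Real.pi / 3) (3 * Real.pi / 4))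
    (A₁ A₂ : Matrix (Fin 3) (Fin 3) ℂ)
    (hA₁ : A₁ = Matrix.diagonal ![1, Complex.exp (α * Complex.I), 0])
    (hA₂ : A₂ = Matrix.diagonal ![0, 1, Complex.exp (α * Complex.I)])
    (ρ : Matrix (Fin 3 → Fin 3) (Fin 3 → Fin 3) ℂ)
    (hρ : ρ = Matrix.diagonal fun j =>
      (((Nat.factorial (occCount j 0) * Nat.factorial (occCount j 1) *
          Nat.factorial (occCount j 2) : ℝ) / (Nat.factorial 3 : ℝ)) *
        p3 α (occCount j 0) (occCount j 1) (occCount j 2) : ℂ)) :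
    ρ.PosSemidef ∧ ρ ≠ 0 ∧
      ∀ B : Fin 3 → Matrix (Fin 3) (Fin 3) ℂ,
        (∀ t, B t = A₁ ∨ B t = A₂) → (ρ * tensorProd B).trace = 0 := by
  obtain ⟨hα1, hα2⟩ := hα
  have hπ := Real.pi_pos
  have hs1 : 0 < Real.sin α :=
    Real.sin_pos_of_pos_of_lt_pi (by linarith) (by linarith)
  have hs2 : Real.sin (2*α) ≤ 0 := by
    have h := Real.sin_nonneg_of_nonneg_of_le_pi (x := 2*α - Real.pi) (by linarith) (by linarith)
    rw [Real.sin_sub_pi] at h; linarith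
  have hs3 : 0 ≤ Real.sin (3*α) := by
    have h := Real.sin_nonneg_of_nonneg_of_le_pi (x := 3*α - 2*Real.pi)
      (by linarith) (by linarith)
    rwa [Real.sin_sub_two_pi] at h
  subst hρ hA₁ hA₂
  refine ⟨?_, ?_, ?_⟩
  · refine posSemidef_diagonal_iff.mpr fun j => ?_
    have hmem := occ_mem j
    simp only [List.mem_cons, List.not_mem_nil, or_false] at hmem
    rcases hmem with h|h|h|h|h|h|h|h|h|h <;>
      (rw [Prod.mk.injEq, Prod.mk.injEq] at h; obtain ⟨h0, h1, h2⟩ := h; rw [h0, h1, h2]) <;>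
      · norm_cast
        try norm_num [p3, Nat.factorial]
        try linarith
  · intro h
    have h0 := congrFun (congrFun h (fun _ : Fin 3 => (0 : Fin 3))) (fun _ : Fin 3 => (0 : Fin 3))
    have e0 : occCount (fun _ : Fin 3 => (0 : Fin 3)) 0 = 3 := by decide
    have e1 : occCount (fun _ : Fin 3 => (0 : Fin 3)) 1 = 0 := by decide
    have e2 : occCount (fun _ : Fin 3 => (0 : Fin 3)) 2 = 0 := by decide
    rw [Matrix.diagonal_apply_eq] at h0
    rw [e0, e1, e2] at h0
    norm_num [p3, Nat.factorial] at h0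
    rw [← Complex.ofReal_sin, Complex.ofReal_eq_zero] at h0
    linarith
  · intro B hB
    rw [trace_diag_mul_pi]
    rcases hB 0 with h0 | h0 <;> rcases hB 1 with h1 | h1 <;> rcases hB 2 with h2 | h2 <;>
      · simp only [tensorProd, Fin.prod_univ_three, Matrix.cons_val_zero, Matrix.cons_val_one,
          Matrix.head_cons, Matrix.cons_val_two, Matrix.tail_cons, h0, h1, h2]
        simp only [Fin.sum_univ_three, occCount_vec, Matrix.cons_val_zero, Matrix.cons_val_one,
          Matrix.head_cons, Matrix.cons_val_two, Matrix.tail_cons, Matrix.diagonal_apply_eq]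
        norm_num [p3, Nat.factorial, Fin.ext_iff]
        first
        | linear_combination key1 α
        | linear_combination Complex.exp (α*Complex.I) * key1 α
        | linear_combination (Complex.exp (α*Complex.I)/3) * key1 α + (1/3 : ℂ) * key2 α
        | linear_combination (1/3 : ℂ) * key1 α + (Complex.exp (α*Complex.I)/3) * key2 α
end
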